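/- Assume K is diagonal in the v_n-basis. Let y^δ ∈ Y, α > 0, and suppose the series x* = ∑_n H_{α,σ_n}(σ_n^{1/3} ⟨y^δ, u_n⟩) v_n converges in X. Then x* is a stationary point of the ℓ^{1/2} Tikhonov functional: for every n with ⟨x*, v_n⟩ ≠ 0, 2 σ_n (σ_n ⟨x*, v_n⟩ − ⟨y^δ, u_n⟩) + α · sign(⟨x*, v_n⟩) / (2 √(|⟨x*, v_n⟩|)) = 0, and ⟨x*, v_n⟩ = 0 for every n with |σ_n^{1/3} ⟨y^δ, u_n⟩| ≤ (3/4) α^{2/3}. -/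

import Mathlib

open scoped InnerProductSpace

/-- The half thresholding function `H_{α,σ}`. -/
noncomputable def halfThresh (α σ t : ℝ) : ℝ :=
  if |t| ≤ 3 / 4 * α ^ ((2 : ℝ) / 3) then 0
  else 2 / (3 * σ ^ ((4 : ℝ) / 3)) * t *
    (1 + Real.cos (2 / 3 * Real.pi -
      2 / 3 * Real.arccos (α / 8 * (|t| / 3) ^ (-(3 : ℝ) / 2))))

/-!
Everything happens coordinatewise: `⟪x*, v n⟫` is the `n`-th coefficient of the series, so the
claim is a statement about one real number `x = H_{α,σ}(σ^{1/3} b)`. Below the threshold `x = 0`.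
Above it, for `t = σ^{1/3} b > 0`, write `a = σ^{1/3}`, `r = √(t/3)` and `c = cos ψ` with
`ψ = π/3 - φ_α(t)/3`. Then `x = (2rc/a²)²`, and the first-order condition for `x` reduces to
`8r³(4c³ - 3c) + α = 0`, which is the triple-angle formula `4c³ - 3c = cos 3ψ = -cos φ_α(t)`
together with `cos φ_α(t) = α/(8r³)`. The threshold `|t| > (3/4) α^{2/3}` is exactly what makes
`α/(8r³) ≤ 1`, so that `arccos` is applied inside its domain. Negative `t` follows by oddness.
-/

open Real

lemma rpow_div_three_eq_pow {x : ℝ} (hx : 0 ≤ x) (k : ℕ) :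
    x ^ ((k : ℝ) / 3) = (x ^ ((1 : ℝ) / 3)) ^ k := by
  rw [← rpow_natCast, ← rpow_mul hx]
  ring_nf

lemma rpow_one_div_three_pow_three {x : ℝ} (hx : 0 ≤ x) : (x ^ ((1 : ℝ) / 3)) ^ 3 = x := by
  rw [one_div]; exact_mod_cast rpow_inv_natCast_pow hx three_ne_zero

lemma rpow_neg_three_div_two {x : ℝ} (hx : 0 ≤ x) : x ^ (-(3 : ℝ) / 2) = (√x ^ 3)⁻¹ := by
  rw [sqrt_eq_rpow, ← rpow_natCast, ← rpow_mul hx, ← rpow_neg hx]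
  norm_num

lemma div_eight_le_sqrt_pow_three {α s : ℝ} (hα : 0 ≤ α) (hs : 3 / 4 * α ^ ((2 : ℝ) / 3) ≤ s) :
    α / 8 ≤ √(s / 3) ^ 3 := by
  set β := α ^ ((1 : ℝ) / 3)
  have hβ : 0 ≤ β := by positivity
  have hβ3 : β ^ 3 = α := rpow_one_div_three_pow_three hα
  have hβ2 : α ^ ((2 : ℝ) / 3) = β ^ 2 := by exact_mod_cast rpow_div_three_eq_pow hα 2
  have hle : β / 2 ≤ √(s / 3) := le_sqrt_of_sq_le (by nlinarith)
  calc α / 8 = (β / 2) ^ 3 := by rw [← hβ3]; ring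
    _ ≤ √(s / 3) ^ 3 := by gcongr

noncomputable def halfThreshAngle (α s : ℝ) : ℝ :=
  π / 3 - arccos (α / 8 * (s / 3) ^ (-(3 : ℝ) / 2)) / 3

lemma cos_halfThreshAngle_pos (α s : ℝ) : 0 < cos (halfThreshAngle α s) := by
  have hφ0 := arccos_nonneg (α / 8 * (s / 3) ^ (-(3 : ℝ) / 2))
  have hφπ := arccos_le_pi (α / 8 * (s / 3) ^ (-(3 : ℝ) / 2))
  apply cos_pos_of_mem_Ioo
  constructor <;> unfold halfThreshAngle <;> linarith [pi_pos]

lemma halfThresh_eq_of_lt {α σ t : ℝ} (ht : 3 / 4 * α ^ ((2 : ℝ) / 3) < |t|) :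
    halfThresh α σ t = 4 * t * cos (halfThreshAngle α |t|) ^ 2 / (3 * σ ^ ((4 : ℝ) / 3)) := by
  rw [halfThresh, if_neg ht.not_ge, cos_sq, halfThreshAngle]
  ring_nf

lemma cos_three_mul_halfThreshAngle {α s : ℝ} (hα : 0 < α)
    (hs : 3 / 4 * α ^ ((2 : ℝ) / 3) ≤ s) :
    8 * √(s / 3) ^ 3 * cos (3 * halfThreshAngle α s) = -α := by
  have hs0 : 0 < s := lt_of_lt_of_le (by positivity) hs
  have hr0 : 0 < √(s / 3) := by positivity
  have hz : α / 8 * (s / 3) ^ (-(3 : ℝ) / 2) = α / 8 / √(s / 3) ^ 3 := by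
    rw [rpow_neg_three_div_two (by positivity), ← div_eq_mul_inv]
  have hz1 : α / 8 / √(s / 3) ^ 3 ≤ 1 :=
    (div_le_one (by positivity)).mpr (div_eight_le_sqrt_pow_three hα.le hs)
  rw [halfThreshAngle, hz, show ∀ φ : ℝ, 3 * (π / 3 - φ / 3) = π - φ by intro; ring, cos_pi_sub,
    cos_arccos (by linarith [show 0 ≤ α / 8 / √(s / 3) ^ 3 by positivity]) hz1]
  field_simp

lemma halfThresh_neg (α σ t : ℝ) : halfThresh α σ (-t) = -halfThresh α σ t := by
  unfold halfThresh
  rw [abs_neg]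
  split_ifs <;> ring

/-- Derivative at `x ≠ 0` of `x ↦ (σ x - b)² + α √|x|`, the `n`-th coordinate part of `Φ_α`
when `σ = σ_n`, `b = ⟨y^δ, u_n⟩`. -/
noncomputable def halfTikhonovDeriv (α σ b x : ℝ) : ℝ :=
  2 * σ * (σ * x - b) + α * Real.sign x / (2 * √|x|)

lemma halfTikhonovDeriv_neg (α σ b x : ℝ) :
    halfTikhonovDeriv α σ (-b) (-x) = -halfTikhonovDeriv α σ b x := by
  simp only [halfTikhonovDeriv, Real.sign_neg, abs_neg]
  ring

lemma halfTikhonovDeriv_halfThresh_of_pos {α σ b : ℝ} (hα : 0 < α) (hσ : 0 < σ)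
    (ht : 3 / 4 * α ^ ((2 : ℝ) / 3) < σ ^ ((1 : ℝ) / 3) * b) :
    halfTikhonovDeriv α σ b (halfThresh α σ (σ ^ ((1 : ℝ) / 3) * b)) = 0 := by
  set a := σ ^ ((1 : ℝ) / 3)
  set t := a * b
  have ha : 0 < a := by positivity
  have hσa : σ = a ^ 3 := (rpow_one_div_three_pow_three hσ.le).symm
  have hσ4 : σ ^ ((4 : ℝ) / 3) = a ^ 4 := by exact_mod_cast rpow_div_three_eq_pow hσ.le 4
  have ht0 : 0 < t := lt_of_le_of_lt (by positivity) ht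
  have hx := halfThresh_eq_of_lt (σ := σ) ((abs_of_pos ht0).symm ▸ ht)
  rw [abs_of_pos ht0, hσ4] at hx
  have hc : 0 < cos (halfThreshAngle α t) := cos_halfThreshAngle_pos α t
  have hcubic := cos_three_mul_halfThreshAngle hα ht.le
  rw [cos_three_mul] at hcubic
  have hr : 0 < √(t / 3) := by positivity
  have htr : t = 3 * √(t / 3) ^ 2 := by rw [sq_sqrt (by positivity)]; ring
  generalize cos (halfThreshAngle α t) = c at hc hcubic hx
  generalize √(t / 3) = r at hr htr hcubic
  have hb : b = 3 * r ^ 2 / a := by rw [eq_div_iff ha.ne', mul_comm, ← htr]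
  replace hx : halfThresh α σ t = (2 * r * c / a ^ 2) ^ 2 := by
    rw [hx, htr]; field_simp; ring
  rw [halfTikhonovDeriv, hx, abs_of_nonneg (sq_nonneg _), sqrt_sq (by positivity),
    Real.sign_of_pos (by positivity), hσa, hb]
  field_simp
  linear_combination a ^ 2 * hcubic

lemma halfTikhonovDeriv_halfThresh {α σ b : ℝ} (hα : 0 < α) (hσ : 0 < σ)
    (ht : 3 / 4 * α ^ ((2 : ℝ) / 3) < |σ ^ ((1 : ℝ) / 3) * b|) :
    halfTikhonovDeriv α σ b (halfThresh α σ (σ ^ ((1 : ℝ) / 3) * b)) = 0 := by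
  rcases lt_abs.mp ht with hpos | hneg
  · exact halfTikhonovDeriv_halfThresh_of_pos hα hσ hpos
  · rw [← mul_neg] at hneg
    have := halfTikhonovDeriv_halfThresh_of_pos hα hσ hneg
    rwa [mul_neg, halfThresh_neg, halfTikhonovDeriv_neg, neg_eq_zero] at this

lemma Orthonormal.inner_eq_of_hasSum {ι E : Type*} [NormedAddCommGroup E] [InnerProductSpace ℝ E]
    {v : ι → E} (hv : Orthonormal ℝ v) {c : ι → ℝ} {x : E}
    (hx : HasSum (fun i => c i • v i) x) (i : ι) : ⟪x, v i⟫_ℝ = c i := by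
  have h := hx.mapL (innerSL ℝ (v i))
  simp only [innerSL_apply_apply, real_inner_smul_right] at h
  have hsingle := hasSum_single (f := fun j => c j * ⟪v i, v j⟫_ℝ) i
    fun j hj => by rw [hv.inner_eq_zero (Ne.symm hj), mul_zero]
  rw [real_inner_comm, h.unique hsingle, real_inner_self_eq_norm_sq, hv.1 i, one_pow, mul_one]

theorem halfSVD_stationary_general {X Y : Type*}
    [NormedAddCommGroup X] [InnerProductSpace ℝ X]
    [NormedAddCommGroup Y] [InnerProductSpace ℝ Y]
    (σ : ℕ → ℝ) (v : ℕ → X) (u : ℕ → Y)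
    (hσ : ∀ n, 0 < σ n) (hv : Orthonormal ℝ v)
    (yδ : Y) (α : ℝ) (hα : 0 < α)
    (xstar : X)
    (hxstar : HasSum
      (fun n => halfThresh α (σ n) (σ n ^ ((1 : ℝ) / 3) * ⟪yδ, u n⟫_ℝ) • v n) xstar) :
    (∀ n : ℕ, ⟪xstar, v n⟫_ℝ ≠ 0 →
      2 * σ n * (σ n * ⟪xstar, v n⟫_ℝ - ⟪yδ, u n⟫_ℝ)
        + α * Real.sign (⟪xstar, v n⟫_ℝ) / (2 * Real.sqrt (|⟪xstar, v n⟫_ℝ|)) = 0) ∧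
    (∀ n : ℕ, |σ n ^ ((1 : ℝ) / 3) * ⟪yδ, u n⟫_ℝ| ≤ 3 / 4 * α ^ ((2 : ℝ) / 3) →
      ⟪xstar, v n⟫_ℝ = 0) := by
  have hcoeff := hv.inner_eq_of_hasSum hxstar
  refine ⟨fun n hn => ?_, fun n hn => by rw [hcoeff, halfThresh, if_pos hn]⟩
  have hthresh : 3 / 4 * α ^ ((2 : ℝ) / 3) < |σ n ^ ((1 : ℝ) / 3) * ⟪yδ, u n⟫_ℝ| := by
    by_contra! hle
    exact hn (by rw [hcoeff, halfThresh, if_pos hle])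
  rw [hcoeff]
  exact halfTikhonovDeriv_halfThresh hα (hσ n) hthresh

/-- If the compact operator `K` is diagonal in the `v n`-basis, `α > 0`, and the series
`x* = ∑ H_{α,σ_n}(σ_n^{1/3} ⟨y^δ, u_n⟩) v_n` converges in `X`, then `x*` is a stationary
point of the `ℓ^{1/2}` Tikhonov functional: the first-order condition holds at every
nonzero coefficient, and `⟨x*, v_n⟩ = 0` whenever `|σ_n^{1/3} ⟨y^δ, u_n⟩| ≤ (3/4) α^{2/3}`. -/
theorem halfSVD_stationary {X Y : Type*}
    [NormedAddCommGroup X] [InnerProductSpace ℝ X] [CompleteSpace X]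
    [NormedAddCommGroup Y] [InnerProductSpace ℝ Y] [CompleteSpace Y]
    (K : X →L[ℝ] Y) (hK : IsCompactOperator K)
    (σ : ℕ → ℝ) (v : ℕ → X) (u : ℕ → Y)
    (hσ : ∀ n, 0 < σ n) (hv : Orthonormal ℝ v) (hu : Orthonormal ℝ u)
    (hKv : ∀ n, K (v n) = σ n • u n)
    (hKadj : ∀ n, (ContinuousLinearMap.adjoint K) (u n) = σ n • v n)
    (hcomplete : (Submodule.span ℝ (Set.range v)).topologicalClosure = ⊤)
    (yδ : Y) (α : ℝ) (hα : 0 < α)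
    (xstar : X)
    (hxstar : HasSum
      (fun n => halfThresh α (σ n) (σ n ^ ((1 : ℝ) / 3) * ⟪yδ, u n⟫_ℝ) • v n) xstar) :
    (∀ n : ℕ, ⟪xstar, v n⟫_ℝ ≠ 0 →
      2 * σ n * (σ n * ⟪xstar, v n⟫_ℝ - ⟪yδ, u n⟫_ℝ)
        + α * Real.sign (⟪xstar, v n⟫_ℝ) / (2 * Real.sqrt (|⟪xstar, v n⟫_ℝ|)) = 0) ∧
    (∀ n : ℕ, |σ n ^ ((1 : ℝ) / 3) * ⟪yδ, u n⟫_ℝ| ≤ 3 / 4 * α ^ ((2 : ℝ) / 3) →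
      ⟪xstar, v n⟫_ℝ = 0) :=
  halfSVD_stationary_general σ v u hσ hv yδ α hα xstar hxstar
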